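/- (Main duality theorem) Assume W is finite with longest element w₀. Then for every x ∈ W: b(C_x) · H_{w₀} = P_{x w₀}, where C_x is the Kazhdan–Lusztig basis element, b is the involution with b(v) = -v⁻¹ and b(H_y) = H_y, and P_{x w₀} is the dual (projective) basis element characterized by ⟨P_{x w₀}, C_y⟩ = δ_{x w₀, y}. -/

import Mathlib

open LaurentPolynomial

/-- Membership in `v ℤ[v] ⊆ ℤ[v,v⁻¹]`. -/
def IsVPol (p : LaurentPolynomial ℤ) : Prop :=
  ∃ q : Polynomial ℤ, p = Polynomial.toLaurent q * T 1

/-- The coefficient of `v` in a Laurent polynomial. -/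
def muCoeff (p : LaurentPolynomial ℤ) : ℤ := p.coeff 1

variable {B W : Type*} [Group W] {M : CoxeterMatrix B}

/-- The Bruhat order `≤` on `W`: generated by right multiplication by reflections which
increases the length. -/
def BruhatLE (cs : CoxeterSystem M W) : W → W → Prop :=
  Relation.ReflTransGen
    (fun a b => (∃ t, cs.IsReflection t ∧ b = a * t) ∧ cs.length a < cs.length b)

/-- The strict Bruhat order on `W`. -/
def BruhatLT (cs : CoxeterSystem M W) (x y : W) : Prop :=
  BruhatLE cs x y ∧ x ≠ y

/-- The Hecke algebra of a Coxeter system, axiomatized: a `ℤ[v,v⁻¹]`-algebra with a basis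
`T_x` indexed by `W` satisfying the braid and quadratic relations. -/
structure HeckeAlg (cs : CoxeterSystem M W) (A : Type*) [Ring A]
    [Algebra (LaurentPolynomial ℤ) A] where
  Tb : Module.Basis W (LaurentPolynomial ℤ) A
  Tb_one : Tb 1 = 1
  Tb_mul : ∀ x y : W, cs.length (x * y) = cs.length x + cs.length y →
    Tb x * Tb y = Tb (x * y)
  Tb_quadratic : ∀ i : B, (Tb (cs.simple i) + 1) *
    (Tb (cs.simple i) - algebraMap (LaurentPolynomial ℤ) A (T (-2))) = 0

namespace HeckeAlg

variable {cs : CoxeterSystem M W} {A : Type*} [Ring A] [Algebra (LaurentPolynomial ℤ) A]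

/-- The standard basis element `H_x = v^{ℓ(x)} T_x`. -/
noncomputable def H (ha : HeckeAlg cs A) (x : W) : A :=
  algebraMap (LaurentPolynomial ℤ) A (T (cs.length x : ℤ)) * ha.Tb x

/-- The element `C_s = H_s + v` for a simple reflection `s`. -/
noncomputable def Cs (ha : HeckeAlg cs A) (i : B) : A :=
  ha.H (cs.simple i) + algebraMap (LaurentPolynomial ℤ) A (T 1)

/-- Data of the bar involution `d` on the Hecke algebra: a ring endomorphism with
`d(v) = v⁻¹` and `d(H_x) = (H_{x⁻¹})⁻¹`. -/
structure Bar (ha : HeckeAlg cs A) where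
  d : A →+* A
  d_scalar : ∀ n : ℤ, d (algebraMap (LaurentPolynomial ℤ) A (T n)) =
    algebraMap (LaurentPolynomial ℤ) A (T (-n))
  d_H_mul : ∀ x : W, d (ha.H x) * ha.H x⁻¹ = 1
  d_H_mul' : ∀ x : W, ha.H x⁻¹ * d (ha.H x) = 1

/-- `c` is a Kazhdan–Lusztig basis element at `x`: bar-invariant and congruent to `H_x`
modulo `∑_y v ℤ[v] H_y`. -/
def IsKL (ha : HeckeAlg cs A) (bar : ha.Bar) (x : W) (c : A) : Prop :=
  bar.d c = c ∧ ∃ f : W →₀ LaurentPolynomial ℤ, (∀ y, IsVPol (f y)) ∧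
    c = ha.H x + f.sum fun y r => r • ha.H y

end HeckeAlg

/-!
Let `Φ` be `d` or `b ∘ d`. Both are ring endomorphisms with `Φ(H_y) H_{y⁻¹} = 1`, and the longest
element satisfies `ℓ(y) + ℓ(y w₀) = ℓ(w₀)`, so `Φ(H_y) H_{w₀} = H_{y w₀}`; on scalars `Φ` is
`v ↦ v⁻¹`, resp. `v ↦ -v`. Hence `b(C_x) H_{w₀} = (b ∘ d)(C_x) H_{w₀}` is `H_{x w₀}` plus a
`v ℤ[v]`-combination of the `H_z`, and its pairing with `C_y` is `δ_{x w₀, y}` modulo `v ℤ[v]`.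
Right multiplication by `H_s` is self-adjoint, so the same pairing is `⟨b(C_x), d(C_y) H_{w₀⁻¹}⟩`,
which is `δ_{x, y w₀⁻¹}` modulo `v⁻¹ ℤ[v⁻¹]`. Thus `b(C_x) H_{w₀}` and `P_{x w₀}` have the same
pairings with all `C_y`, and these pairings determine an element: since the dual family `P` exists,
`u ↦ (⟨u, C_y⟩)_y` is a surjective, hence injective, endomorphism of the free module `ℤ[v,v⁻¹]^W`.

The length identity for `w₀` comes from counting inversions: every reflection is an inversion of
`w₀`, the number of inversions of `w` is `ℓ(w)`, and a reflection `t` is an inversion of `y w₀`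
exactly when `w₀ t w₀⁻¹` is not an inversion of `y`. Both facts are read off Tits' sign
representation of `W` on `W × ZMod 2`.
-/

open scoped Classical

namespace LaurentPolynomial

section Ring

variable {R : Type*} [Ring R]

def supportedIn (P : ℤ → Prop) (hP : ∀ a b, P a → P b → P (a + b)) :
    NonUnitalSubring R[T;T⁻¹] where
  carrier := {p | ∀ n, p.coeff n ≠ 0 → P n}
  zero_mem' n h := absurd rfl h
  add_mem' {p q} hp hq n h := by
    by_cases hpn : p.coeff n = 0
    · exact hq n (by simpa [hpn] using h)
    · exact hp n hpn
  neg_mem' {p} hp n h := hp n (by simpa using h)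
  mul_mem' {p q} hp hq n h := by
    obtain ⟨a, ha, b, hb, rfl⟩ := Finset.mem_add.mp
      (AddMonoidAlgebra.support_coeff_mul_subset p q (Finsupp.mem_support_iff.mpr h))
    exact hP a b (hp a (Finsupp.mem_support_iff.mp ha)) (hq b (Finsupp.mem_support_iff.mp hb))

theorem mem_supportedIn {P : ℤ → Prop} {hP} {p : R[T;T⁻¹]} :
    p ∈ supportedIn P hP ↔ ∀ n, p.coeff n ≠ 0 → P n :=
  Iff.rfl

variable (R) in
/-- `v R[v]`, for `v = T 1`. -/
def posSupported : NonUnitalSubring R[T;T⁻¹] :=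
  supportedIn (0 < ·) fun _ _ => add_pos

variable (R) in
/-- `v⁻¹ R[v⁻¹]`. -/
def negSupported : NonUnitalSubring R[T;T⁻¹] :=
  supportedIn (· < 0) fun _ _ => add_neg

theorem mem_posSupported {p : R[T;T⁻¹]} : p ∈ posSupported R ↔ ∀ n, p.coeff n ≠ 0 → 0 < n :=
  mem_supportedIn

theorem mem_negSupported {p : R[T;T⁻¹]} : p ∈ negSupported R ↔ ∀ n, p.coeff n ≠ 0 → n < 0 :=
  mem_supportedIn

theorem eq_zero_of_mem_posSupported_of_mem_negSupported {p : R[T;T⁻¹]}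
    (hpos : p ∈ posSupported R) (hneg : p ∈ negSupported R) : p = 0 :=
  LaurentPolynomial.ext fun n => by
    by_contra h
    exact (mem_posSupported.mp hpos n h).not_gt (mem_negSupported.mp hneg n h)

end Ring

theorem mem_posSupported_of_isVPol {p : ℤ[T;T⁻¹]} (hp : IsVPol p) : p ∈ posSupported ℤ := by
  obtain ⟨q, rfl⟩ := hp
  rw [mem_posSupported]
  intro n hn
  rw [show (T 1 : ℤ[T;T⁻¹]) = .single 1 1 from rfl, AddMonoidAlgebra.coeff_mul_single_apply,
    mul_one] at hn
  have hmem := Finsupp.mem_support_iff.mpr hn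
  rw [support_coeff_toLaurent] at hmem
  obtain ⟨m, -, hm⟩ := Finset.mem_map.mp hmem
  rw [Nat.castEmbedding_apply] at hm
  omega

theorem invert_mem_negSupported {R : Type*} [CommRing R] {p : R[T;T⁻¹]}
    (hp : p ∈ posSupported R) : invert p ∈ negSupported R :=
  mem_negSupported.mpr fun n hn =>
    neg_pos.mp (mem_posSupported.mp hp _ (by rwa [invert_apply] at hn))

theorem coeff_apply_eq_sign_mul_coeff_neg {f : ℤ[T;T⁻¹] →+* ℤ[T;T⁻¹]}
    (hf : ∀ n : ℤ, f (T n) = (if Even n then 1 else -1) * T (-n)) (p : ℤ[T;T⁻¹]) (m : ℤ) :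
    (f p).coeff m = (if Even m then 1 else -1) * p.coeff (-m) := by
  induction p using LaurentPolynomial.induction_on' with
  | add p q hp hq =>
    simp only [map_add, AddMonoidAlgebra.coeff_add, Finsupp.add_apply, hp, hq, mul_add]
  | C_mul_T n a =>
    have hsign : ∀ k : ℤ, (if Even k then 1 else -1 : ℤ[T;T⁻¹]) =
        ((if Even k then 1 else -1 : ℤ) : ℤ[T;T⁻¹]) := fun k => by split_ifs <;> simp
    rw [map_mul, hf, hsign, eq_intCast C a, map_intCast, ← mul_assoc, ← Int.cast_mul,
      ← zsmul_eq_mul, ← zsmul_eq_mul, AddMonoidAlgebra.coeff_smul_apply,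
      AddMonoidAlgebra.coeff_smul_apply, T_apply, T_apply]
    by_cases h : n = -m
    · subst h
      simp only [neg_neg, if_true, even_neg, smul_eq_mul, mul_one]
      ring
    · simp [h, show -n ≠ m by omega]

theorem map_mem_negSupported {f : ℤ[T;T⁻¹] →+* ℤ[T;T⁻¹]}
    (hf : ∀ n : ℤ, f (T n) = (if Even n then 1 else -1) * T (-n)) {p : ℤ[T;T⁻¹]}
    (hp : p ∈ posSupported ℤ) : f p ∈ negSupported ℤ :=
  mem_negSupported.mpr fun n hn => by
    rw [coeff_apply_eq_sign_mul_coeff_neg hf] at hn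
    exact neg_pos.mp (mem_posSupported.mp hp _ (right_ne_zero_of_mul hn))

theorem map_mem_posSupported {f : ℤ[T;T⁻¹] →+* ℤ[T;T⁻¹]}
    (hf : ∀ n : ℤ, f (T n) = (if Even n then 1 else -1) * T (-n)) {p : ℤ[T;T⁻¹]}
    (hp : p ∈ negSupported ℤ) : f p ∈ posSupported ℤ :=
  mem_posSupported.mpr fun n hn => by
    rw [coeff_apply_eq_sign_mul_coeff_neg hf] at hn
    exact neg_neg_iff_pos.mp (mem_negSupported.mp hp _ (right_ne_zero_of_mul hn))

end LaurentPolynomial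

theorem dotProduct_sub_ite_mem {ι R : Type*} [Fintype ι] [DecidableEq ι] [CommRing R]
    (S : NonUnitalSubring R) {i j : ι} {a b : ι → R}
    (ha : ∀ k, a k - (Pi.single i 1 : ι → R) k ∈ S)
    (hb : ∀ k, b k - (Pi.single j 1 : ι → R) k ∈ S) :
    a ⬝ᵥ b - (if i = j then 1 else 0) ∈ S := by
  set f := a - Pi.single i 1
  set g := b - Pi.single j 1
  have hab : a ⬝ᵥ b - (if i = j then 1 else 0) = f ⬝ᵥ g + f j + g i := by
    rw [show a = Pi.single i 1 + f by simp [f], show b = Pi.single j 1 + g by simp [g]]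
    simp only [add_dotProduct, dotProduct_add, single_dotProduct, dotProduct_single, one_mul,
      mul_one, Pi.add_apply, Pi.single_apply, eq_comm (a := j)]
    abel
  rw [hab]
  exact add_mem (add_mem (sum_mem fun k _ => mul_mem (ha k) (hb k)) (ha j)) (hb i)

theorem eq_of_forall_apply_eq_of_dual {ι R N : Type*} [Fintype ι] [DecidableEq ι] [CommRing R]
    [AddCommGroup N] [Module R N] (b : Module.Basis ι R N) (F : N →ₗ[R] N →ₗ[R] R)
    {C P : ι → N} (hP : ∀ i j, F (P i) (C j) = if i = j then 1 else 0) {u u' : N}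
    (h : ∀ j, F u (C j) = F u' (C j)) : u = u' := by
  let φ : N →ₗ[R] ι → R := LinearMap.pi fun j => F.flip (C j)
  have hφ : Function.Surjective φ := fun a => ⟨∑ i, a i • P i, funext fun j => by
    simp [φ, hP]⟩
  have hinj : Function.Injective (φ ∘ₗ b.equivFun.symm.toLinearMap) :=
    OrzechProperty.injective_of_surjective_endomorphism _
      (hφ.comp b.equivFun.symm.surjective)
  refine (hinj.comp b.equivFun.injective) ?_
  simp only [Function.comp_apply, LinearMap.coe_comp, LinearEquiv.coe_coe,
    LinearEquiv.symm_apply_apply]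
  exact funext h

theorem RingHom.map_single_one_apply {ι R S : Type*} [DecidableEq ι] [NonAssocSemiring R]
    [NonAssocSemiring S] (τ : R →+* S) (i j : ι) :
    τ ((Pi.single i 1 : ι → R) j) = (Pi.single i 1 : ι → S) j := by
  rw [Pi.apply_single (fun _ => τ) (fun _ => map_zero τ), map_one]

theorem mul_mul_inv_eq_iff {G : Type*} [Group G] (g t a : G) :
    g * t * g⁻¹ = a ↔ t = g⁻¹ * a * g := by
  constructor
  · rintro rfl; group
  · rintro rfl; group

namespace CoxeterSystem

variable (cs : CoxeterSystem M W)

local prefix:100 "s" => cs.simple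
local prefix:100 "π" => cs.wordProd
local prefix:100 "ℓ" => cs.length
local prefix:100 "ris" => cs.rightInvSeq

theorem simple_mul_mul_simple_eq_iff (i : B) (t a : W) :
    s i * t * s i = a ↔ t = s i * a * s i := by
  simpa only [cs.inv_simple] using mul_mul_inv_eq_iff (s i) t a

noncomputable def titsPerm (i : B) : Equiv.Perm (W × ZMod 2) :=
  Function.Involutive.toPerm (fun p => (s i * p.1 * s i, p.2 + if p.1 = s i then 1 else 0))
    fun ⟨t, e⟩ => by
      have hconj : s i * t * s i = s i ↔ t = s i := by
        rw [simple_mul_mul_simple_eq_iff, cs.simple_mul_simple_self, one_mul]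
      ext
      · simp [mul_assoc, ← mul_assoc (s i) (s i)]
      · simp only [hconj, add_assoc, CharTwo.add_self_eq_zero, add_zero]

theorem titsPerm_apply (i : B) (t : W) (e : ZMod 2) :
    cs.titsPerm i (t, e) = (s i * t * s i, e + if t = s i then 1 else 0) :=
  rfl

theorem simple_mul_pow_mul_simple (i j : B) (k : ℕ) :
    s j * (s i * s j) ^ k * s j = ((s i * s j) ^ k)⁻¹ := by
  have h : s j * (s i * s j) * (s j)⁻¹ = (s i * s j)⁻¹ := by
    simp [mul_assoc, cs.inv_simple]
  rw [show s j * (s i * s j) ^ k * s j = s j * (s i * s j) ^ k * (s j)⁻¹ by rw [cs.inv_simple],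
    ← conj_pow, h, inv_pow]

theorem titsPerm_mul_pow_apply (i j : B) (k : ℕ) (t : W) (e : ZMod 2) :
    ((cs.titsPerm i * cs.titsPerm j) ^ k) (t, e) =
      ((s i * s j) ^ k * t * ((s i * s j) ^ k)⁻¹,
        e + ∑ n ∈ Finset.range (2 * k), if t = ((s i * s j) ^ n)⁻¹ * s j then 1 else 0) := by
  set p := s i * s j with hp
  induction k with
  | zero => simp
  | succ k ih =>
    have hshift : s j * p ^ k = (p ^ k)⁻¹ * s j := by
      rw [← cs.simple_mul_pow_mul_simple, mul_assoc _ (s j), cs.simple_mul_simple_self, mul_one]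
    have hr₀ : p ^ k * t * (p ^ k)⁻¹ = s j ↔ t = (p ^ (2 * k))⁻¹ * s j := by
      rw [mul_mul_inv_eq_iff, mul_assoc, hshift]
      group
    have hr₁ : s j * (p ^ k * t * (p ^ k)⁻¹) * s j = s i ↔ t = (p ^ (2 * k + 1))⁻¹ * s j := by
      rw [simple_mul_mul_simple_eq_iff, mul_mul_inv_eq_iff,
        show s j * s i * s j = p⁻¹ * s j by simp [hp, mul_inv_rev, cs.inv_simple], mul_assoc,
        mul_assoc, hshift]
      group
    rw [pow_succ', Equiv.Perm.mul_apply, ih, Equiv.Perm.mul_apply, titsPerm_apply, titsPerm_apply]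
    refine Prod.ext ?_ ?_
    · show s i * (s j * (p ^ k * t * (p ^ k)⁻¹) * s j) * s i =
        p ^ (k + 1) * t * (p ^ (k + 1))⁻¹
      rw [pow_succ', hp, mul_inv_rev, mul_inv_rev, cs.inv_simple, cs.inv_simple]
      group
    · show e + _ + _ + _ = _
      rw [hr₀, hr₁, show 2 * (k + 1) = 2 * k + 1 + 1 by ring, Finset.sum_range_succ,
        Finset.sum_range_succ]
      ring

theorem isLiftable_titsPerm : M.IsLiftable cs.titsPerm := by
  intro i j
  ext ⟨t, e⟩ : 1
  have hperiod : ∀ n, ((s i * s j) ^ (M i j + n))⁻¹ * s j = ((s i * s j) ^ n)⁻¹ * s j :=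
    fun n => by rw [pow_add, cs.simple_mul_simple_pow, one_mul]
  rw [titsPerm_mul_pow_apply, cs.simple_mul_simple_pow, two_mul, Finset.sum_range_add]
  simp only [hperiod, CharTwo.add_self_eq_zero, add_zero, one_mul, inv_one, mul_one,
    Equiv.Perm.coe_one, id_eq]

noncomputable def titsRep : W →* Equiv.Perm (W × ZMod 2) :=
  cs.lift ⟨cs.titsPerm, cs.isLiftable_titsPerm⟩

/-- The parity of the number of occurrences of `t` in the right inversion sequence of any word
for `w` (`inversionParity_wordProd`). -/
noncomputable def inversionParity (w t : W) : ZMod 2 :=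
  (cs.titsRep w (t, 0)).2

theorem titsRep_apply (w t : W) (e : ZMod 2) :
    cs.titsRep w (t, e) = (w * t * w⁻¹, e + cs.inversionParity w t) := by
  induction w using cs.simple_induction_left generalizing t e with
  | one => simp [inversionParity]
  | mul_simple_left w i ih =>
    have key : ∀ f, cs.titsRep (s i * w) (t, f) = (s i * w * t * (s i * w)⁻¹,
        f + (cs.inversionParity w t + if w * t * w⁻¹ = s i then 1 else 0)) := by
      intro f
      rw [map_mul, Equiv.Perm.mul_apply, ih, titsRep, lift_apply_simple, titsPerm_apply,
        mul_inv_rev, cs.inv_simple, add_assoc]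
      simp only [mul_assoc]
    rw [key, show cs.inversionParity (s i * w) t = _ from congrArg Prod.snd (key 0), zero_add]

theorem inversionParity_mul (u v t : W) :
    cs.inversionParity (u * v) t =
      cs.inversionParity v t + cs.inversionParity u (v * t * v⁻¹) := by
  rw [inversionParity, map_mul, Equiv.Perm.mul_apply, titsRep_apply, titsRep_apply, zero_add]

theorem inversionParity_simple (i : B) (t : W) :
    cs.inversionParity (s i) t = if t = s i then 1 else 0 := by
  rw [inversionParity, titsRep, lift_apply_simple, titsPerm_apply, zero_add]

theorem inversionParity_wordProd (ω : List B) (t : W) :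
    cs.inversionParity (π ω) t = (ris ω).count t := by
  induction ω with
  | nil => simp [inversionParity]
  | cons i ω ih =>
    rw [wordProd_cons, inversionParity_mul, ih, inversionParity_simple, rightInvSeq,
      List.count_cons]
    simp only [beq_iff_eq, mul_mul_inv_eq_iff, eq_comm (a := t)]
    push_cast
    rfl

theorem inversionParity_one (t : W) : cs.inversionParity 1 t = 0 := by
  simp [inversionParity]

theorem mem_rightInvSeq_of_inversionParity_eq_one {ω : List B} {t : W}
    (h : cs.inversionParity (π ω) t = 1) : t ∈ ris ω := by
  refine List.count_pos_iff.mp (Nat.pos_of_ne_zero fun h0 => ?_)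
  rw [inversionParity_wordProd, h0, Nat.cast_zero] at h
  exact zero_ne_one h

theorem isRightInversion_of_inversionParity_eq_one {w t : W} (h : cs.inversionParity w t = 1) :
    cs.IsRightInversion w t := by
  obtain ⟨ω, hω, rfl⟩ := cs.exists_isReduced w
  exact cs.isRightInversion_of_mem_rightInvSeq hω (cs.mem_rightInvSeq_of_inversionParity_eq_one h)

theorem inversionParity_self {t : W} (ht : cs.IsReflection t) : cs.inversionParity t t = 1 := by
  obtain ⟨u, i, rfl⟩ := ht
  have hinv := cs.inversionParity_mul u⁻¹ u (s i)
  rw [inv_mul_cancel, inversionParity_one] at hinv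
  rw [inversionParity_mul, inv_inv, show u⁻¹ * (u * s i * u⁻¹) * u = s i by group,
    inversionParity_mul, inversionParity_simple, if_pos rfl, cs.inv_simple,
    cs.simple_mul_simple_self, one_mul]
  linear_combination -hinv

theorem inversionParity_eq_one_iff {w t : W} (ht : cs.IsReflection t) :
    cs.inversionParity w t = 1 ↔ cs.IsRightInversion w t := by
  refine ⟨cs.isRightInversion_of_inversionParity_eq_one, fun h => ?_⟩
  have hsplit := cs.inversionParity_mul (w * t) t t
  rw [show w * t * t = w by rw [mul_assoc, ht.mul_self, mul_one], show t * t * t⁻¹ = t by group,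
    cs.inversionParity_self ht] at hsplit
  have hwt : cs.inversionParity (w * t) t ≠ 1 := fun h' => by
    have := (cs.isRightInversion_of_inversionParity_eq_one h').2
    rw [mul_assoc, ht.mul_self, mul_one] at this
    exact this.not_gt h.2
  rw [hsplit]
  revert hwt
  generalize cs.inversionParity (w * t) t = a
  decide +revert

theorem isRightInversion_mul_iff {u v t : W} (hv : cs.IsRightInversion v t) :
    cs.IsRightInversion (u * v) t ↔ ¬cs.IsRightInversion u (v * t * v⁻¹) := by
  have ht := hv.1
  rw [← cs.inversionParity_eq_one_iff ht, ← cs.inversionParity_eq_one_iff (ht.conj v),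
    inversionParity_mul, (cs.inversionParity_eq_one_iff ht).mpr hv]
  generalize cs.inversionParity u (v * t * v⁻¹) = a
  decide +revert

open Finset in
theorem card_filter_isRightInversion [Fintype W] (w : W) :
    #{t | cs.IsRightInversion w t} = ℓ w := by
  obtain ⟨ω, hω, rfl⟩ := cs.exists_isReduced w
  have hfilter : ({t | cs.IsRightInversion (π ω) t} : Finset W) = (ris ω).toFinset := by
    ext t
    simp only [mem_filter, mem_univ, true_and, List.mem_toFinset]
    exact ⟨fun h => cs.mem_rightInvSeq_of_inversionParity_eq_one
      ((cs.inversionParity_eq_one_iff h.1).mpr h), cs.isRightInversion_of_mem_rightInvSeq hω⟩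
  rw [hfilter, List.toFinset_card_of_nodup hω.nodup_rightInvSeq, length_rightInvSeq, hω]

open Finset in
theorem length_add_length_mul_of_forall_length_le [Fintype W] {w : W} (hw : ∀ x, ℓ x ≤ ℓ w)
    (x : W) : ℓ x + ℓ (x * w) = ℓ w := by
  have hinv : ∀ t, cs.IsReflection t → cs.IsRightInversion w t := fun t ht =>
    ⟨ht, (hw _).lt_of_ne (ht.length_mul_left_ne w)⟩
  have hsplit := (univ.filter (cs.IsRightInversion w)).card_filter_add_card_filter_not
    (cs.IsRightInversion (x * w))
  have hfilter : (univ.filter (cs.IsRightInversion w)).filter (cs.IsRightInversion (x * w)) =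
      univ.filter (cs.IsRightInversion (x * w)) := by
    ext t
    simp only [mem_filter, mem_univ, true_and, and_iff_right_iff_imp]
    exact fun h => hinv t h.1
  have hconj : #((univ.filter (cs.IsRightInversion w)).filter
      fun t => ¬cs.IsRightInversion (x * w) t) = #{t | cs.IsRightInversion x t} := by
    refine card_equiv (MulAut.conj w).toEquiv fun t => ?_
    simp only [mem_filter, mem_univ, true_and, MulEquiv.toEquiv_eq_coe, MulEquiv.coe_toEquiv,
      MulAut.conj_apply]
    constructor
    · rintro ⟨hw, hxw⟩
      exact not_not.mp (mt (cs.isRightInversion_mul_iff hw).mpr hxw)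
    · intro hx
      have hwt := hinv t ((cs.isReflection_conj_iff w t).mp hx.1)
      exact ⟨hwt, fun h => (cs.isRightInversion_mul_iff hwt).mp h hx⟩
  rw [hfilter, hconj, card_filter_isRightInversion, card_filter_isRightInversion,
    card_filter_isRightInversion] at hsplit
  omega

end CoxeterSystem

namespace HeckeAlg

variable {cs : CoxeterSystem M W} {A : Type*} [Ring A] [Algebra ℤ[T;T⁻¹] A] (ha : HeckeAlg cs A)

theorem H_eq_smul (x : W) : ha.H x = (T (cs.length x) : ℤ[T;T⁻¹]) • ha.Tb x :=
  (Algebra.smul_def _ _).symm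

theorem H_one : ha.H 1 = 1 := by
  simp [H, ha.Tb_one]

theorem H_mul_H {x y : W} (h : cs.length (x * y) = cs.length x + cs.length y) :
    ha.H x * ha.H y = ha.H (x * y) := by
  rw [H_eq_smul, H_eq_smul, H_eq_smul, smul_mul_smul_comm, ← T_add, ha.Tb_mul x y h, h]
  push_cast
  rfl

noncomputable def basisH : Module.Basis W ℤ[T;T⁻¹] A :=
  ha.Tb.unitsSMul fun x => (isUnit_T (cs.length x : ℤ)).unit

theorem basisH_apply (x : W) : ha.basisH x = ha.H x := by
  rw [basisH, Module.Basis.unitsSMul_apply, Units.smul_def, IsUnit.unit_spec, H_eq_smul]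

theorem H_simple_mul_self (i : B) :
    ha.H (cs.simple i) * ha.H (cs.simple i) =
      1 + (T (-1) - T 1 : ℤ[T;T⁻¹]) • ha.H (cs.simple i) := by
  have hquad := ha.Tb_quadratic i
  rw [Algebra.algebraMap_eq_smul_one] at hquad
  rw [H_eq_smul, cs.length_simple, Nat.cast_one, smul_mul_smul_comm]
  set t := ha.Tb (cs.simple i)
  have htt : t * t = (T (-2) : ℤ[T;T⁻¹]) • t + (T (-2) : ℤ[T;T⁻¹]) • 1 - t := by
    simp only [mul_sub, add_mul, mul_smul_comm, one_mul, mul_one] at hquad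
    linear_combination (norm := module) hquad
  have h₁ : (T 1 * T 1 * T (-2) : ℤ[T;T⁻¹]) = 1 := by rw [← T_add, ← T_add]; rfl
  have h₂ : (T (-1) * T 1 : ℤ[T;T⁻¹]) = 1 := by rw [← T_add]; rfl
  rw [htt]
  linear_combination (norm := module) (h₁ - h₂) • t + h₁ • (1 : A)

theorem H_mul_H_simple (x : W) (i : B) :
    ha.H x * ha.H (cs.simple i) = ha.H (x * cs.simple i) +
      if cs.IsRightDescent x i then (T (-1) - T 1 : ℤ[T;T⁻¹]) • ha.H x else 0 := by
  by_cases hd : cs.IsRightDescent x i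
  · have hx : ha.H (x * cs.simple i) * ha.H (cs.simple i) = ha.H x := by
      rw [ha.H_mul_H, cs.simple_mul_simple_cancel_right]
      rw [cs.simple_mul_simple_cancel_right, cs.length_simple, cs.isRightDescent_iff.mp hd]
    rw [if_pos hd, ← hx, mul_assoc, H_simple_mul_self, mul_add, mul_one, mul_smul_comm]
  · rw [if_neg hd, add_zero]
    exact ha.H_mul_H (by rw [cs.length_simple, cs.not_isRightDescent_iff.mp hd])

section Form

variable {Bf : A →ₗ[ℤ[T;T⁻¹]] A →ₗ[ℤ[T;T⁻¹]] ℤ[T;T⁻¹]}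

theorem Bf_eq_dotProduct [Fintype W]
    (hBf : ∀ x y : W, Bf (ha.H x) (ha.H y) = if x = y then 1 else 0) (u u' : A) :
    Bf u u' = ha.basisH.equivFun u ⬝ᵥ ha.basisH.equivFun u' := by
  conv_lhs => rw [← ha.basisH.sum_equivFun u, ← ha.basisH.sum_equivFun u']
  simp [map_sum, basisH_apply, hBf, dotProduct, mul_comm]

theorem Bf_mul_H_simple (hBf : ∀ x y : W, Bf (ha.H x) (ha.H y) = if x = y then 1 else 0)
    (i : B) (u u' : A) :
    Bf (u * ha.H (cs.simple i)) u' = Bf u (u' * ha.H (cs.simple i)) := by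
  suffices Bf ∘ₗ LinearMap.mulRight ℤ[T;T⁻¹] (ha.H (cs.simple i)) =
      Bf.compl₂ (LinearMap.mulRight ℤ[T;T⁻¹] (ha.H (cs.simple i))) from
    LinearMap.congr_fun₂ this u u'
  refine ha.basisH.ext fun x => ha.basisH.ext fun y => ?_
  simp only [LinearMap.comp_apply, LinearMap.compl₂_apply, LinearMap.mulRight_apply, basisH_apply,
    H_mul_H_simple, map_add, LinearMap.add_apply, hBf]
  have hδ : x * cs.simple i = y ↔ x = y * cs.simple i := by
    constructor <;> rintro rfl <;> simp
  rw [if_congr hδ rfl rfl]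
  congr 1
  by_cases hxy : x = y
  · subst hxy
    split_ifs <;> simp [hBf]
  · split_ifs <;> simp [hBf, hxy]

theorem Bf_mul_H (hBf : ∀ x y : W, Bf (ha.H x) (ha.H y) = if x = y then 1 else 0)
    (w : W) (u u' : A) : Bf (u * ha.H w) u' = Bf u (u' * ha.H w⁻¹) := by
  induction hn : cs.length w using Nat.strong_induction_on generalizing w u u' with
  | _ n ih =>
  by_cases hw : w = 1
  · simp [hw, H_one]
  obtain ⟨i, hi⟩ := cs.exists_rightDescent_of_ne_one hw
  have hlen := cs.isRightDescent_iff.mp hi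
  have hw' : (w * cs.simple i)⁻¹ = cs.simple i * w⁻¹ := by rw [mul_inv_rev, cs.inv_simple]
  have hH : ha.H w = ha.H (w * cs.simple i) * ha.H (cs.simple i) := by
    rw [ha.H_mul_H, cs.simple_mul_simple_cancel_right]
    rw [cs.simple_mul_simple_cancel_right, cs.length_simple, hlen]
  have hHinv : ha.H w⁻¹ = ha.H (cs.simple i) * ha.H (w * cs.simple i)⁻¹ := by
    rw [ha.H_mul_H, hw', cs.simple_mul_simple_cancel_left]
    rw [hw', cs.simple_mul_simple_cancel_left, cs.length_simple, ← hw', cs.length_inv,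
      cs.length_inv]
    omega
  rw [hH, ← mul_assoc, Bf_mul_H_simple ha hBf, ih _ (by omega) _ _ _ rfl, mul_assoc, ← hHinv]

end Form

theorem Bar.d_algebraMap {ha : HeckeAlg cs A} (bar : ha.Bar) (p : ℤ[T;T⁻¹]) :
    bar.d (algebraMap ℤ[T;T⁻¹] A p) = algebraMap ℤ[T;T⁻¹] A (invert p) := by
  induction p using LaurentPolynomial.induction_on' with
  | add p q hp hq => rw [map_add, map_add, hp, hq, map_add, map_add]
  | C_mul_T n a =>
    rw [map_mul, map_mul, map_mul, bar.d_scalar, invert_T, invert_C, eq_intCast C a, map_intCast,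
      map_intCast, map_mul, map_intCast]

variable [Fintype W]

theorem equivFun_map_mul_H {Φ : A →+* A} {τ : ℤ[T;T⁻¹] →+* ℤ[T;T⁻¹]}
    (hΦ : ∀ p, Φ (algebraMap ℤ[T;T⁻¹] A p) = algebraMap ℤ[T;T⁻¹] A (τ p))
    (hΦH : ∀ x, Φ (ha.H x) * ha.H x⁻¹ = 1) {w : W} (hw : ∀ x, cs.length x ≤ cs.length w)
    (u : A) (z : W) :
    ha.basisH.equivFun (Φ u * ha.H w) z = τ (ha.basisH.equivFun u (z * w⁻¹)) := by
  have hH : ∀ y, Φ (ha.H y) * ha.H w = ha.H (y * w) := fun y => by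
    have hlen := cs.length_add_length_mul_of_forall_length_le hw y
    have hsplit := ha.H_mul_H (x := y⁻¹) (y := y * w)
      (by rw [inv_mul_cancel_left, cs.length_inv]; omega)
    rw [inv_mul_cancel_left] at hsplit
    rw [← hsplit, ← mul_assoc, hΦH, one_mul]
  have hsum : Φ u * ha.H w = ∑ z, τ (ha.basisH.equivFun u (z * w⁻¹)) • ha.basisH z := by
    conv_lhs => rw [← ha.basisH.sum_equivFun u]
    rw [map_sum, Finset.sum_mul]
    refine Fintype.sum_equiv (Equiv.mulRight w) _ _ fun y => ?_
    rw [Algebra.smul_def, map_mul, hΦ, basisH_apply, mul_assoc, hH, ← Algebra.smul_def,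
      Equiv.coe_mulRight, mul_inv_cancel_right, basisH_apply]
  rw [hsum, ← Module.Basis.equivFun_symm_apply, LinearEquiv.apply_symm_apply]

theorem IsKL.equivFun_sub_single_mem {ha : HeckeAlg cs A} {bar : ha.Bar} {x : W} {c : A}
    (h : ha.IsKL bar x c) (z : W) :
    ha.basisH.equivFun c z - (Pi.single x 1 : W → ℤ[T;T⁻¹]) z ∈ posSupported ℤ := by
  obtain ⟨-, f, hf, rfl⟩ := h
  simp only [← basisH_apply, ← Finsupp.linearCombination_apply, Module.Basis.equivFun_apply,
    map_add, Module.Basis.repr_self, Module.Basis.repr_linearCombination,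
    Finsupp.single_eq_pi_single, Pi.add_apply, add_sub_cancel_left]
  exact mem_posSupported_of_isVPol (hf z)

theorem equivFun_map_sub_single_mem {Φ : A →+* A} {τ : ℤ[T;T⁻¹] →+* ℤ[T;T⁻¹]}
    (hΦ : ∀ p, Φ (algebraMap ℤ[T;T⁻¹] A p) = algebraMap ℤ[T;T⁻¹] A (τ p))
    (hΦH : ∀ x, Φ (ha.H x) = ha.H x) {S S' : NonUnitalSubring ℤ[T;T⁻¹]}
    (hτ : ∀ p ∈ S, τ p ∈ S') {u : A} {x : W}
    (hu : ∀ z, ha.basisH.equivFun u z - (Pi.single x 1 : W → ℤ[T;T⁻¹]) z ∈ S) (z : W) :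
    ha.basisH.equivFun (Φ u) z - (Pi.single x 1 : W → ℤ[T;T⁻¹]) z ∈ S' := by
  have hsum : Φ u = ∑ y, τ (ha.basisH.equivFun u y) • ha.basisH y := by
    conv_lhs => rw [← ha.basisH.sum_equivFun u]
    simp only [map_sum, Algebra.smul_def, map_mul, hΦ, basisH_apply, hΦH]
  rw [hsum, ← Module.Basis.equivFun_symm_apply, LinearEquiv.apply_symm_apply,
    ← τ.map_single_one_apply, ← map_sub]
  exact hτ _ (hu z)

theorem equivFun_map_mul_H_sub_single_mem {Φ : A →+* A} {τ : ℤ[T;T⁻¹] →+* ℤ[T;T⁻¹]}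
    (hΦ : ∀ p, Φ (algebraMap ℤ[T;T⁻¹] A p) = algebraMap ℤ[T;T⁻¹] A (τ p))
    (hΦH : ∀ x, Φ (ha.H x) * ha.H x⁻¹ = 1) {w : W} (hw : ∀ x, cs.length x ≤ cs.length w)
    {S S' : NonUnitalSubring ℤ[T;T⁻¹]} (hτ : ∀ p ∈ S, τ p ∈ S') {u : A} {x : W}
    (hu : ∀ z, ha.basisH.equivFun u z - (Pi.single x 1 : W → ℤ[T;T⁻¹]) z ∈ S) (z : W) :
    ha.basisH.equivFun (Φ u * ha.H w) z - (Pi.single (x * w) 1 : W → ℤ[T;T⁻¹]) z ∈ S' := by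
  have hsingle : (Pi.single (x * w) 1 : W → ℤ[T;T⁻¹]) z =
      (Pi.single x 1 : W → ℤ[T;T⁻¹]) (z * w⁻¹) := by
    simp only [Pi.single_apply, mul_inv_eq_iff_eq_mul]
  rw [equivFun_map_mul_H ha hΦ hΦH hw, hsingle, ← τ.map_single_one_apply, ← map_sub]
  exact hτ _ (hu _)

end HeckeAlg

/-- main duality theorem: `b(C_x) · H_{w₀} = P_{x w₀}`, where `b` is the
ring involution with `b(v) = -v⁻¹` and `b(H_y) = H_y`. -/
theorem stmt19 {B W : Type*} [Group W] [Fintype W] {M : CoxeterMatrix B}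
    (cs : CoxeterSystem M W)
    (A : Type*) [Ring A] [Algebra (LaurentPolynomial ℤ) A] (ha : HeckeAlg cs A)
    (bar : ha.Bar) (w0 : W) (hw0 : ∀ x : W, cs.length x ≤ cs.length w0)
    (Bf : A →ₗ[LaurentPolynomial ℤ] A →ₗ[LaurentPolynomial ℤ] LaurentPolynomial ℤ)
    (hBf : ∀ x y : W, Bf (ha.H x) (ha.H y) = if x = y then 1 else 0)
    (C : W → A) (hC : ∀ z, ha.IsKL bar z (C z))
    (P : W → A) (hP : ∀ x y : W, Bf (P x) (C y) = if x = y then 1 else 0)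
    (bR : LaurentPolynomial ℤ →+* LaurentPolynomial ℤ)
    (hbR : ∀ n : ℤ, bR (T n) = (if Even n then 1 else -1) * T (-n))
    (bA : A →+* A)
    (hbA : ∀ p : LaurentPolynomial ℤ,
      bA (algebraMap (LaurentPolynomial ℤ) A p) = algebraMap (LaurentPolynomial ℤ) A (bR p))
    (hbAH : ∀ y : W, bA (ha.H y) = ha.H y)
    (x : W) :
    bA (C x) * ha.H w0 = P (x * w0) := by
  have hw0inv : ∀ z, cs.length z ≤ cs.length w0⁻¹ := by simpa only [cs.length_inv] using hw0
  have hbd : ∀ p, (bA.comp bar.d) (algebraMap _ A p) =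
      algebraMap _ A ((bR.comp (invert (R := ℤ) : ℤ[T;T⁻¹] →+* ℤ[T;T⁻¹])) p) := fun p => by
    simp [bar.d_algebraMap, hbA]
  have hbdH : ∀ z, (bA.comp bar.d) (ha.H z) * ha.H z⁻¹ = 1 := fun z => by
    rw [RingHom.comp_apply, ← hbAH z⁻¹, ← map_mul, bar.d_H_mul, map_one]
  have hpos : ∀ y, Bf (bA (C x) * ha.H w0) (C y) - (if x * w0 = y then 1 else 0) ∈
      posSupported ℤ := fun y => by
    rw [ha.Bf_eq_dotProduct hBf]
    refine dotProduct_sub_ite_mem _ ?_ (hC y).equivFun_sub_single_mem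
    rw [← (hC x).1]
    exact ha.equivFun_map_mul_H_sub_single_mem hbd hbdH hw0
      (fun p hp => map_mem_posSupported hbR (invert_mem_negSupported hp))
      (hC x).equivFun_sub_single_mem
  have hneg : ∀ y, Bf (bA (C x) * ha.H w0) (C y) - (if x * w0 = y then 1 else 0) ∈
      negSupported ℤ := fun y => by
    rw [ha.Bf_mul_H hBf, ha.Bf_eq_dotProduct hBf, if_congr eq_mul_inv_iff_mul_eq.symm rfl rfl]
    refine dotProduct_sub_ite_mem _
      (ha.equivFun_map_sub_single_mem hbA hbAH (fun p => map_mem_negSupported hbR)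
        (hC x).equivFun_sub_single_mem) ?_
    rw [← (hC y).1]
    exact ha.equivFun_map_mul_H_sub_single_mem (τ := (invert (R := ℤ) : ℤ[T;T⁻¹] →+* ℤ[T;T⁻¹]))
      bar.d_algebraMap bar.d_H_mul hw0inv (fun p => invert_mem_negSupported)
      (hC y).equivFun_sub_single_mem
  refine eq_of_forall_apply_eq_of_dual ha.basisH Bf hP fun y => ?_
  rw [hP, ← sub_eq_zero]
  exact eq_zero_of_mem_posSupported_of_mem_negSupported (hpos y) (hneg y)
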